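/- arXiv:2404.04865 — 2 statements merged into one kernel-verified Lean document; each statement's English description precedes it below -/
import Mathlib

section
/- Let R be a separate ranking function space, i.e., for every x ∈ X there exists r_x ∈ R with r_x(x) < r_x(x') for all x' ∈ X ∖ {x}. If the binary class φ∘R = {(x,x') ↦ 1_{r(x)>r(x')} : r ∈ R} on X × X has finite VC dimension d, and |X| ≥ (28d+14)·log(14d+7) (natural logarithm), then OOD detection is not learnable under AUC in the separate space 𝒟^s for R. -/
/-!
Take `k = dvc + 1` disjoint pairs of points of `X`. They cannot be shattered by `φ∘R`, so they
can be oriented as `(aᵢ, bᵢ)` in such a way that no `r ∈ R` ranks every `aᵢ` strictly above its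
`bᵢ`. Let `Dᵢ` have ID marginal uniform on `{a₁, …, a_k}` and OOD marginal `δ_{bᵢ}`. These domains
are separate, `R` attains AUC `1` on each of them because it is a separate ranking space, and,
the learner seeing only ID data, they all induce the same sample distribution. Every ranking
the learner outputs misorders some pair `i` and thereby loses at least `1/(2k)` AUC on `Dᵢ`;
averaging over `i`, some `Dᵢ` has expected excess AUC at least `1/(2k²)` at every sample size.
-/

open MeasureTheory Filter Set
open scoped ENNReal NNReal

noncomputable section

namespace OODF

/-- A *domain*: a mixture `(1-π)·D_I + π·D_O` of an ID joint distribution `D_I` on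
`𝒳 × {1,…,K}` and an OOD joint distribution `D_O` on `𝒳 × {K+1}`, with class prior
`π ∈ [0,1)`.  Labels are encoded as naturals: ID labels are `{1,…,K}`, OOD label is `K+1`. -/
structure Domain (𝒳 : Type*) [MeasurableSpace 𝒳] (K : ℕ) where
  DI : Measure (𝒳 × ℕ)
  DO : Measure (𝒳 × ℕ)
  prior : ℝ
  probI : IsProbabilityMeasure DI
  probO : IsProbabilityMeasure DO
  suppI : DI {p | p.2 ∉ Set.Icc 1 K} = 0
  suppO : DO {p | p.2 ≠ K + 1} = 0
  prior_mem : prior ∈ Set.Ico (0 : ℝ) 1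

variable {𝒳 : Type*} [MeasurableSpace 𝒳] {K : ℕ}

namespace Domain

/-- the mixed joint distribution `D_XY = (1-π)·D_I + π·D_O` -/
def joint (D : Domain 𝒳 K) : Measure (𝒳 × ℕ) :=
  ENNReal.ofReal (1 - D.prior) • D.DI + ENNReal.ofReal D.prior • D.DO

/-- the marginal `D_{X_I}` of the ID joint distribution on the feature space -/
def margI (D : Domain 𝒳 K) : Measure 𝒳 := D.DI.map Prod.fst

/-- the marginal `D_{X_O}` of the OOD joint distribution on the feature space -/
def margO (D : Domain 𝒳 K) : Measure 𝒳 := D.DO.map Prod.fst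

/-- the domain `D^α = (1-α)·D_I + α·D_O`, i.e. `D` with its class prior replaced by `α` -/
def withPrior (D : Domain 𝒳 K) (α : Set.Ico (0 : ℝ) 1) : Domain 𝒳 K :=
  { D with prior := α.1, prior_mem := α.2 }

end Domain

/-- a prior-unknown domain space: closed under changing the class prior -/
def PriorUnknown (𝒟 : Set (Domain 𝒳 K)) : Prop :=
  ∀ D ∈ 𝒟, ∀ α : Set.Ico (0 : ℝ) 1, D.withPrior α ∈ 𝒟

/-- the risk `R_D(h)` w.r.t. the mixed joint distribution -/
def risk (ℓ : ℕ → ℕ → ℝ) (D : Domain 𝒳 K) (h : 𝒳 → ℕ) : ℝ :=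
  ∫ p, ℓ (h p.1) p.2 ∂D.joint

/-- the ID risk `R_D^in(h)` -/
def riskIn (ℓ : ℕ → ℕ → ℝ) (D : Domain 𝒳 K) (h : 𝒳 → ℕ) : ℝ :=
  ∫ p, ℓ (h p.1) p.2 ∂D.DI

/-- the OOD risk `R_D^out(h)` -/
def riskOut (ℓ : ℕ → ℕ → ℝ) (D : Domain 𝒳 K) (h : 𝒳 → ℕ) : ℝ :=
  ∫ p, ℓ (h p.1) (K + 1) ∂D.DO

/-- the `α`-risk `R_D^α(h) = (1-α)·R_D^in(h) + α·R_D^out(h)` -/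
def riskA (ℓ : ℕ → ℕ → ℝ) (D : Domain 𝒳 K) (h : 𝒳 → ℕ) (α : ℝ) : ℝ :=
  (1 - α) * riskIn ℓ D h + α * riskOut ℓ D h

/-- the distribution of an i.i.d. sample of size `n` from the ID joint distribution -/
def sampleMeasure (D : Domain 𝒳 K) (n : ℕ) : Measure (Fin n → 𝒳 × ℕ) :=
  letI := D.probI
  Measure.pi fun _ => D.DI

/-- An algorithm maps, for every sample size `n ≥ 1`, a labeled sample to a function on `𝒳`. -/
abbrev Algorithm (𝒳 β : Type*) := (n : ℕ) → (Fin n → 𝒳 × ℕ) → (𝒳 → β)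

/-- `A` is consistent w.r.t. `𝒟` under risk with rate `ε`: it outputs hypotheses in `H`,
the resulting risks are measurable in the sample, and the expected excess risk for samples
of size `n ≥ 1` is at most `ε n`. -/
def ConsistentRisk (ℓ : ℕ → ℕ → ℝ) (𝒟 : Set (Domain 𝒳 K)) (H : Set (𝒳 → ℕ))
    (A : Algorithm 𝒳 ℕ) (ε : ℕ → ℝ) : Prop :=
  (∀ n : ℕ, 1 ≤ n → ∀ S, A n S ∈ H) ∧
  (∀ D ∈ 𝒟, ∀ n : ℕ, 1 ≤ n → Measurable fun S : Fin n → 𝒳 × ℕ => risk ℓ D (A n S)) ∧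
  ∀ D ∈ 𝒟, ∀ n : ℕ, 1 ≤ n →
    ∫ S, (risk ℓ D (A n S) - ⨅ h : H, risk ℓ D h.1) ∂(sampleMeasure D n) ≤ ε n

/-- OOD detection is learnable under risk in `𝒟` for `H` with the given rate. -/
def LearnableRiskRate (ℓ : ℕ → ℕ → ℝ) (𝒟 : Set (Domain 𝒳 K)) (H : Set (𝒳 → ℕ))
    (ε : ℕ → ℝ) : Prop :=
  ∃ A, ConsistentRisk ℓ 𝒟 H A ε

/-- learnability of OOD detection under risk -/
def LearnableRisk (ℓ : ℕ → ℕ → ℝ) (𝒟 : Set (Domain 𝒳 K)) (H : Set (𝒳 → ℕ)) : Prop :=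
  ∃ ε : ℕ → ℝ, Antitone ε ∧ Tendsto ε atTop (nhds 0) ∧ LearnableRiskRate ℓ 𝒟 H ε

/-- `A` is strongly consistent: the expected excess `α`-risks are uniformly small over
all `α ∈ [0,1]`. -/
def StrongConsistentRisk (ℓ : ℕ → ℕ → ℝ) (𝒟 : Set (Domain 𝒳 K)) (H : Set (𝒳 → ℕ))
    (A : Algorithm 𝒳 ℕ) (ε : ℕ → ℝ) : Prop :=
  (∀ n : ℕ, 1 ≤ n → ∀ S, A n S ∈ H) ∧
  (∀ D ∈ 𝒟, ∀ n : ℕ, 1 ≤ n → ∀ α : ℝ,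
    Measurable fun S : Fin n → 𝒳 × ℕ => riskA ℓ D (A n S) α) ∧
  ∀ D ∈ 𝒟, ∀ n : ℕ, 1 ≤ n → ∀ α ∈ Set.Icc (0 : ℝ) 1,
    ∫ S, (riskA ℓ D (A n S) α - ⨅ h : H, riskA ℓ D h.1 α) ∂(sampleMeasure D n) ≤ ε n

/-- strong learnability of OOD detection under risk -/
def StrongLearnableRisk (ℓ : ℕ → ℕ → ℝ) (𝒟 : Set (Domain 𝒳 K)) (H : Set (𝒳 → ℕ)) : Prop :=
  ∃ ε : ℕ → ℝ, Antitone ε ∧ Tendsto ε atTop (nhds 0) ∧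
    ∃ A, StrongConsistentRisk ℓ 𝒟 H A ε

/-- the AUC of a ranking function `r` w.r.t. ID marginal `P` and OOD marginal `Q`:
`AUC(r) = E_{x ~ P} E_{x' ~ Q} [1_{r(x) > r(x')} + (1/2)·1_{r(x) = r(x')}]` -/
def AUC (r : 𝒳 → ℝ) (P Q : Measure 𝒳) : ℝ :=
  ∫ x, (∫ x', ((if r x' < r x then (1 : ℝ) else 0) +
      (1 / 2) * (if r x = r x' then (1 : ℝ) else 0)) ∂Q) ∂P

/-- `A` is AUC-consistent w.r.t. `𝒟` with rate `ε`. -/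
def ConsistentAUC (𝒟 : Set (Domain 𝒳 K)) (R : Set (𝒳 → ℝ))
    (A : Algorithm 𝒳 ℝ) (ε : ℕ → ℝ) : Prop :=
  (∀ n : ℕ, 1 ≤ n → ∀ S, A n S ∈ R) ∧
  (∀ D ∈ 𝒟, ∀ n : ℕ, 1 ≤ n →
    Measurable fun S : Fin n → 𝒳 × ℕ => AUC (A n S) D.margI D.margO) ∧
  ∀ D ∈ 𝒟, ∀ n : ℕ, 1 ≤ n →
    ∫ S, ((⨆ r : R, AUC r.1 D.margI D.margO) - AUC (A n S) D.margI D.margO)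
      ∂(sampleMeasure D n) ≤ ε n

/-- OOD detection is learnable under AUC in `𝒟` for `R` with the given rate. -/
def LearnableAUCRate (𝒟 : Set (Domain 𝒳 K)) (R : Set (𝒳 → ℝ)) (ε : ℕ → ℝ) : Prop :=
  ∃ A, ConsistentAUC 𝒟 R A ε

/-- learnability of OOD detection under AUC -/
def LearnableAUC (𝒟 : Set (Domain 𝒳 K)) (R : Set (𝒳 → ℝ)) : Prop :=
  ∃ ε : ℕ → ℝ, Antitone ε ∧ Tendsto ε atTop (nhds 0) ∧ LearnableAUCRate 𝒟 R ε

/-- the (topological) support of a measure -/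
def mSupport {α : Type*} [TopologicalSpace α] [MeasurableSpace α] (μ : Measure α) : Set α :=
  {x | ∀ U ∈ nhds x, 0 < μ U}

/-- the separate space `𝒟^s`: all domains whose ID and OOD marginals have disjoint supports -/
def separateSpace (𝒳 : Type*) [MeasurableSpace 𝒳] [TopologicalSpace 𝒳] (K : ℕ) :
    Set (Domain 𝒳 K) :=
  {D | mSupport D.margO ∩ mSupport D.margI = ∅}

/-- a class `G` of binary functions (encoded as predicates) shatters the finite set `C` -/
def Shatters {α : Type*} (G : Set (α → Prop)) (C : Finset α) : Prop :=
  ∀ f : α → Prop, ∃ g ∈ G, ∀ x ∈ C, g x ↔ f x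

/-- the VC dimension of a class of binary functions (encoded as predicates) -/
def VCdim {α : Type*} (G : Set (α → Prop)) : ℕ∞ :=
  sSup {n : ℕ∞ | ∃ C : Finset α, Shatters G C ∧ n = (C.card : ℕ∞)}

def pairScore (u v : ℝ) : ℝ :=
  (if v < u then 1 else 0) + 1 / 2 * (if u = v then 1 else 0)

lemma pairScore_nonneg (u v : ℝ) : 0 ≤ pairScore u v := by
  unfold pairScore; split_ifs <;> norm_num

lemma pairScore_le_one (u v : ℝ) : pairScore u v ≤ 1 := by
  unfold pairScore
  split_ifs with hlt heq
  · exact absurd hlt (heq ▸ lt_irrefl v)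
  all_goals norm_num

lemma pairScore_eq_one_of_lt {u v : ℝ} (h : v < u) : pairScore u v = 1 := by
  simp [pairScore, h, h.ne']

lemma pairScore_le_half_of_not_lt {u v : ℝ} (h : ¬ v < u) : pairScore u v ≤ 1 / 2 := by
  unfold pairScore; split_ifs <;> norm_num

lemma AUC_eq_integral_pairScore (r : 𝒳 → ℝ) (P Q : Measure 𝒳) :
    AUC r P Q = ∫ x, ∫ x', pairScore (r x) (r x') ∂Q ∂P := rfl

lemma AUC_nonneg (r : 𝒳 → ℝ) (P Q : Measure 𝒳) : 0 ≤ AUC r P Q :=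
  integral_nonneg fun _ => integral_nonneg fun _ => pairScore_nonneg _ _

lemma AUC_le_one (r : 𝒳 → ℝ) (P Q : Measure 𝒳) [IsProbabilityMeasure P]
    [IsProbabilityMeasure Q] : AUC r P Q ≤ 1 := by
  have integral_le_one {μ : Measure 𝒳} [IsProbabilityMeasure μ] {f : 𝒳 → ℝ}
      (h0 : ∀ x, 0 ≤ f x) (h1 : ∀ x, f x ≤ 1) : ∫ x, f x ∂μ ≤ 1 := by
    have := norm_integral_le_of_norm_le_const (μ := μ) (f := f) (C := 1)
      (ae_of_all _ fun x => by rw [Real.norm_of_nonneg (h0 x)]; exact h1 x)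
    rwa [Real.norm_of_nonneg (integral_nonneg h0), probReal_univ, one_mul] at this
  exact integral_le_one (fun _ => integral_nonneg fun _ => pairScore_nonneg _ _)
    fun _ => integral_le_one (fun _ => pairScore_nonneg _ _) fun _ => pairScore_le_one _ _

lemma AUC_dirac [MeasurableSingletonClass 𝒳] (r : 𝒳 → ℝ) (P : Measure 𝒳) (b : 𝒳) :
    AUC r P (Measure.dirac b) = ∫ x, pairScore (r x) (r b) ∂P := by
  simp only [AUC_eq_integral_pairScore, integral_dirac]

def uniformDirac {ι : Type*} [Fintype ι] (a : ι → 𝒳) : Measure 𝒳 :=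
  (Fintype.card ι : ℝ≥0∞)⁻¹ • ∑ i, Measure.dirac (a i)

section uniformDirac

variable {ι : Type*} [Fintype ι]

instance isProbabilityMeasure_uniformDirac [Nonempty ι] (a : ι → 𝒳) :
    IsProbabilityMeasure (uniformDirac a) := by
  constructor
  simp [uniformDirac, ENNReal.inv_mul_cancel]

lemma uniformDirac_compl_range [MeasurableSingletonClass 𝒳] (a : ι → 𝒳) :
    uniformDirac a (Set.range a)ᶜ = 0 := by
  simp [uniformDirac, Measure.dirac_apply]

lemma integral_uniformDirac [MeasurableSingletonClass 𝒳] (a : ι → 𝒳) (f : 𝒳 → ℝ) :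
    ∫ x, f x ∂(uniformDirac a) = (Fintype.card ι : ℝ)⁻¹ * ∑ i, f (a i) := by
  rw [uniformDirac, integral_smul_measure,
    integral_finsetSum_measure fun i _ => integrable_dirac enorm_lt_top]
  simp

end uniformDirac

section AUCUniform

variable [MeasurableSingletonClass 𝒳] {ι : Type*} [Fintype ι] (r : 𝒳 → ℝ) (a : ι → 𝒳) (b : 𝒳)

lemma AUC_uniformDirac_dirac :
    AUC r (uniformDirac a) (Measure.dirac b)
      = (Fintype.card ι : ℝ)⁻¹ * ∑ i, pairScore (r (a i)) (r b) := by
  rw [AUC_dirac, integral_uniformDirac]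

lemma AUC_uniformDirac_dirac_eq_one [Nonempty ι] (h : ∀ i, r b < r (a i)) :
    AUC r (uniformDirac a) (Measure.dirac b) = 1 := by
  simp [AUC_uniformDirac_dirac, pairScore_eq_one_of_lt (h _)]

lemma AUC_uniformDirac_dirac_le [DecidableEq ι] {i : ι} (h : ¬ r b < r (a i)) :
    AUC r (uniformDirac a) (Measure.dirac b) ≤ 1 - 1 / (2 * Fintype.card ι) := by
  have hcard : (0 : ℝ) < Fintype.card ι := by
    exact_mod_cast Fintype.card_pos_iff.mpr ⟨i⟩
  have hscore : ∀ j, pairScore (r (a j)) (r b) ≤ 1 - if j = i then 1 / 2 else 0 := by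
    intro j
    split_ifs with hj
    · subst hj; linarith [pairScore_le_half_of_not_lt h]
    · linarith [pairScore_le_one (r (a j)) (r b)]
  have hsum : ∑ j, pairScore (r (a j)) (r b) ≤ Fintype.card ι - 1 / 2 := by
    calc ∑ j, pairScore (r (a j)) (r b) ≤ ∑ j, (1 - if j = i then (1 : ℝ) / 2 else 0) :=
          Finset.sum_le_sum fun j _ => hscore j
      _ = Fintype.card ι - 1 / 2 := by simp
  rw [AUC_uniformDirac_dirac]
  calc (Fintype.card ι : ℝ)⁻¹ * ∑ j, pairScore (r (a j)) (r b)
      ≤ (Fintype.card ι : ℝ)⁻¹ * (Fintype.card ι - 1 / 2) := by gcongr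
    _ = 1 - 1 / (2 * Fintype.card ι) := by field_simp

end AUCUniform

namespace Domain

def ofMarginals (hK : 1 ≤ K) (P Q : Measure 𝒳) [IsProbabilityMeasure P]
    [IsProbabilityMeasure Q] : Domain 𝒳 K where
  DI := P.map fun x => (x, 1)
  DO := Q.map fun x => (x, K + 1)
  prior := 0
  probI := Measure.isProbabilityMeasure_map measurable_prodMk_right.aemeasurable
  probO := Measure.isProbabilityMeasure_map measurable_prodMk_right.aemeasurable
  suppI := by
    have hs : MeasurableSet {p : 𝒳 × ℕ | p.2 ∉ Icc 1 K} :=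
      measurable_snd (.of_discrete (s := {n | n ∉ Icc 1 K}))
    rw [Measure.map_apply measurable_prodMk_right hs]
    simp [Nat.one_le_iff_ne_zero.mp hK]
  suppO := by
    have hs : MeasurableSet {p : 𝒳 × ℕ | p.2 ≠ K + 1} :=
      measurable_snd (.of_discrete (s := {n | n ≠ K + 1}))
    rw [Measure.map_apply measurable_prodMk_right hs]
    simp
  prior_mem := ⟨le_rfl, one_pos⟩

variable (hK : 1 ≤ K) (P Q : Measure 𝒳) [IsProbabilityMeasure P] [IsProbabilityMeasure Q]

lemma margI_ofMarginals : (ofMarginals hK P Q).margI = P := by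
  rw [margI, ofMarginals, Measure.map_map measurable_fst measurable_prodMk_right]
  exact Measure.map_id

lemma margO_ofMarginals : (ofMarginals hK P Q).margO = Q := by
  rw [margO, ofMarginals, Measure.map_map measurable_fst measurable_prodMk_right]
  exact Measure.map_id

lemma sampleMeasure_ofMarginals (Q' : Measure 𝒳) [IsProbabilityMeasure Q'] (n : ℕ) :
    sampleMeasure (ofMarginals hK P Q) n = sampleMeasure (ofMarginals hK P Q') n := rfl

end Domain

instance isProbabilityMeasure_sampleMeasure (D : Domain 𝒳 K) (n : ℕ) :
    IsProbabilityMeasure (sampleMeasure D n) := by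
  have := D.probI
  unfold sampleMeasure
  infer_instance

lemma iSup_AUC_eq_one {R : Set (𝒳 → ℝ)} {P Q : Measure 𝒳} [IsProbabilityMeasure P]
    [IsProbabilityMeasure Q] {r : 𝒳 → ℝ} (hr : r ∈ R) (h : AUC r P Q = 1) :
    ⨆ r : R, AUC r.1 P Q = 1 := by
  have : Nonempty R := ⟨⟨r, hr⟩⟩
  refine le_antisymm (ciSup_le fun r => AUC_le_one _ _ _) (h ▸ ?_)
  exact le_ciSup (f := fun r : R => AUC r.1 P Q)
    ⟨1, by rintro _ ⟨r, rfl⟩; exact AUC_le_one _ _ _⟩ ⟨r, hr⟩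

lemma mSupport_subset {E : Type*} [TopologicalSpace E] [MeasurableSpace E] {μ : Measure E}
    {F : Set E} (hF : IsClosed F) (h : μ Fᶜ = 0) : mSupport μ ⊆ F := fun x hx => by
  by_contra hxF
  exact (hx _ (hF.isOpen_compl.mem_nhds hxF)).ne' h

lemma Domain.ofMarginals_mem_separateSpace [TopologicalSpace 𝒳] (hK : 1 ≤ K)
    (P Q : Measure 𝒳) [IsProbabilityMeasure P] [IsProbabilityMeasure Q] {F G : Set 𝒳}
    (hF : IsClosed F) (hG : IsClosed G) (hFG : Disjoint F G) (hP : P Fᶜ = 0) (hQ : Q Gᶜ = 0) :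
    Domain.ofMarginals hK P Q ∈ separateSpace 𝒳 K := by
  rw [separateSpace, Set.mem_ofPred_eq, Domain.margI_ofMarginals, Domain.margO_ofMarginals,
    ← Set.disjoint_iff_inter_eq_empty]
  exact hFG.symm.mono (mSupport_subset hG hQ) (mSupport_subset hF hP)

lemma le_card_mul_of_forall_exists_le {Ω ι : Type*} [MeasurableSpace Ω] [Fintype ι]
    {μ : Measure Ω} [IsProbabilityMeasure μ] {F : ι → Ω → ℝ} {c ε : ℝ}
    (hF : ∀ i, Integrable (F i) μ) (hF0 : ∀ i ω, 0 ≤ F i ω) (hc : ∀ ω, ∃ i, c ≤ F i ω)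
    (hε : ∀ i, ∫ ω, F i ω ∂μ ≤ ε) : c ≤ Fintype.card ι * ε := by
  have hsum : ∀ ω, c ≤ ∑ i, F i ω := fun ω => by
    obtain ⟨i, hi⟩ := hc ω
    exact hi.trans (Finset.single_le_sum (fun j _ => hF0 j ω) (Finset.mem_univ i))
  calc c = ∫ _, c ∂μ := by simp
    _ ≤ ∫ ω, ∑ i, F i ω ∂μ :=
      integral_mono (integrable_const c) (integrable_finsetSum _ fun i _ => hF i) hsum
    _ = ∑ i, ∫ ω, F i ω ∂μ := integral_finsetSum _ fun i _ => hF i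
    _ ≤ ∑ _i : ι, ε := Finset.sum_le_sum fun i _ => hε i
    _ = Fintype.card ι * ε := by simp

lemma not_shatters_of_VCdim_lt {α : Type*} {G : Set (α → Prop)} {C : Finset α}
    (h : VCdim G < C.card) : ¬ Shatters G C :=
  fun hC => h.not_ge (le_sSup ⟨C, hC, rfl⟩)

lemma exists_pairs_not_ranked_of_VCdim_lt {α ι : Type*} [Fintype ι] {R : Set (α → ℝ)}
    (hVC : VCdim {g : α × α → Prop | ∃ r ∈ R, g = fun p => r p.2 < r p.1} < Fintype.card ι)
    (z : ι × Bool ↪ α) :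
    ∃ a b : ι → α, (∀ i j, b i ≠ a j) ∧ ∀ r ∈ R, ∃ i, ¬ r (b i) < r (a i) := by
  classical
  set pair : ι → α × α := fun i => (z (i, true), z (i, false))
  have hpair : Function.Injective pair := fun i j h => by
    simpa using z.injective (congrArg Prod.fst h)
  have hC : VCdim {g : α × α → Prop | ∃ r ∈ R, g = fun p => r p.2 < r p.1}
      < (Finset.univ.image pair).card := by
    rwa [Finset.card_image_of_injective _ hpair, Finset.card_univ]
  obtain ⟨f, hf⟩ : ∃ f : α × α → Prop,
      ∀ r ∈ R, ∃ i, ¬ (r (pair i).2 < r (pair i).1 ↔ f (pair i)) := by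
    simpa [Shatters] using not_shatters_of_VCdim_lt hC
  -- Orient the pairs so that ranking every `a i` above `b i` would realise `f` on them.
  refine ⟨fun i => z (i, f (pair i)), fun i => z (i, !f (pair i)), ?_, ?_⟩
  · intro i j h
    obtain ⟨rfl, h'⟩ := Prod.ext_iff.mp (z.injective h)
    simp at h'
  · intro r hr
    obtain ⟨i, hi⟩ := hf r hr
    refine ⟨i, ?_⟩
    by_cases hfi : f (pair i) <;> simp_all [pair, lt_asymm]

lemma nonempty_embedding_of_card_le {α ι : Type*} [Fintype ι]
    (h : (Fintype.card ι : ℕ∞) ≤ ENat.card α) : Nonempty (ι ↪ α) := by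
  obtain ⟨y, -⟩ := Fin.Embedding.exists_embedding_disjoint_range_of_add_le_ENat_card
    (s := (∅ : Set α)) (by simpa using h)
  exact ⟨(Fintype.equivFin ι).toEmbedding.trans y⟩

lemma two_mul_add_one_le_ceil (d : ℕ) :
    2 * (d + 1) ≤ ⌈(28 * (d : ℝ) + 14) * Real.log (14 * d + 7)⌉₊ := by
  have hlog : 1 ≤ Real.log (14 * d + 7) := by
    rw [Real.le_log_iff_exp_le (by positivity)]
    linarith [Real.exp_one_lt_d9, (Nat.cast_nonneg d : (0 : ℝ) ≤ d)]
  have : (2 * (d + 1) : ℝ) ≤ (28 * (d : ℝ) + 14) * Real.log (14 * d + 7) := by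
    nlinarith [(Nat.cast_nonneg d : (0 : ℝ) ≤ d)]
  exact_mod_cast this.trans (Nat.le_ceil _)

theorem ConsistentAUC.one_div_le_rate [TopologicalSpace 𝒳] [T1Space 𝒳]
    [MeasurableSingletonClass 𝒳] {R : Set (𝒳 → ℝ)} {A : Algorithm 𝒳 ℝ} {ε : ℕ → ℝ}
    (hK : 1 ≤ K) (hA : ConsistentAUC (separateSpace 𝒳 K) R A ε)
    (hsepR : ∀ x, ∃ r ∈ R, ∀ x', x' ≠ x → r x < r x')
    {ι : Type*} [Fintype ι] [Nonempty ι] (a b : ι → 𝒳) (hab : ∀ i j, b i ≠ a j)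
    (hbad : ∀ r ∈ R, ∃ i, ¬ r (b i) < r (a i)) {n : ℕ} (hn : 1 ≤ n) :
    1 / (2 * Fintype.card ι ^ 2) ≤ ε n := by
  classical
  obtain ⟨hAR, hAmeas, hAbound⟩ := hA
  have hD : ∀ i, Domain.ofMarginals hK (uniformDirac a) (Measure.dirac (b i)) ∈
      separateSpace 𝒳 K := fun i =>
    Domain.ofMarginals_mem_separateSpace hK _ _ (Set.finite_range a).isClosed
      isClosed_singleton (Set.disjoint_singleton_right.mpr fun ⟨j, hj⟩ => hab i j hj.symm)
      (uniformDirac_compl_range a) (by simp)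
  have hsup : ∀ i, ⨆ r : R, AUC r.1 (uniformDirac a) (Measure.dirac (b i)) = 1 := fun i => by
    obtain ⟨r, hr, hlt⟩ := hsepR (b i)
    exact iSup_AUC_eq_one hr (AUC_uniformDirac_dirac_eq_one _ _ _ fun j => hlt _ (hab i j).symm)
  obtain ⟨i₀⟩ := ‹Nonempty ι›
  set μ := sampleMeasure (Domain.ofMarginals hK (uniformDirac a) (Measure.dirac (b i₀))) n
  set F : ι → (Fin n → 𝒳 × ℕ) → ℝ :=
    fun i S => 1 - AUC (A n S) (uniformDirac a) (Measure.dirac (b i))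
  have hF : ∀ i, Integrable (F i) μ := fun i => by
    have hmeas := hAmeas _ (hD i) n hn
    rw [Domain.margI_ofMarginals, Domain.margO_ofMarginals] at hmeas
    refine Integrable.of_bound (measurable_const.sub hmeas).aestronglyMeasurable 1
      (ae_of_all _ fun S => ?_)
    rw [Real.norm_of_nonneg (sub_nonneg.mpr (AUC_le_one _ _ _))]
    linarith [AUC_nonneg (A n S) (uniformDirac a) (Measure.dirac (b i))]
  have hFε : ∀ i, ∫ S, F i S ∂μ ≤ ε n := fun i => by
    have := hAbound _ (hD i) n hn
    rwa [Domain.margI_ofMarginals, Domain.margO_ofMarginals, hsup i,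
      Domain.sampleMeasure_ofMarginals hK _ _ (Measure.dirac (b i₀))] at this
  have hcover : ∀ S, ∃ i, 1 / (2 * Fintype.card ι) ≤ F i S := fun S => by
    obtain ⟨i, hi⟩ := hbad _ (hAR n hn S)
    exact ⟨i, by linarith [AUC_uniformDirac_dirac_le (A n S) a (b i) hi]⟩
  have key := le_card_mul_of_forall_exists_le hF
    (fun i S => sub_nonneg.mpr (AUC_le_one _ _ _)) hcover hFε
  have hcard : (0 : ℝ) < Fintype.card ι := by exact_mod_cast Fintype.card_pos
  calc (1 : ℝ) / (2 * Fintype.card ι ^ 2) = 1 / (2 * Fintype.card ι) / Fintype.card ι := by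
        field_simp
    _ ≤ ε n := by rwa [div_le_iff₀ hcard, mul_comm (ε n)]

theorem stmt10_general {d K : ℕ} (hK : 1 ≤ K) (X : Set (EuclideanSpace ℝ (Fin d)))
    (R : Set (↥X → ℝ))
    (hsepR : ∀ x : ↥X, ∃ r ∈ R, ∀ x' : ↥X, x' ≠ x → r x < r x')
    (dvc : ℕ)
    (hVC : VCdim {g : ↥X × ↥X → Prop | ∃ r ∈ R, g = fun p => r p.2 < r p.1} = (dvc : ℕ∞))
    (hcard : ((⌈(28 * (dvc : ℝ) + 14) * Real.log (14 * (dvc : ℝ) + 7)⌉₊ : ℕ∞))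
        ≤ (Set.univ : Set ↥X).encard) :
    ¬ LearnableAUC (separateSpace ↥X K) R := by
  rintro ⟨ε, -, hε, A, hA⟩
  obtain ⟨z⟩ : Nonempty (Fin (dvc + 1) × Bool ↪ ↥X) := by
    refine nonempty_embedding_of_card_le ?_
    rw [← Set.encard_univ]
    refine le_trans ?_ hcard
    simp only [Fintype.card_prod, Fintype.card_fin, Fintype.card_bool, mul_comm _ 2]
    exact_mod_cast two_mul_add_one_le_ceil dvc
  obtain ⟨a, b, hab, hbad⟩ := exists_pairs_not_ranked_of_VCdim_lt (R := R)
    (by rw [hVC, Fintype.card_fin]; exact_mod_cast dvc.lt_succ_self) z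
  have hpos : (0 : ℝ) < 1 / (2 * Fintype.card (Fin (dvc + 1)) ^ 2) := by positivity
  obtain ⟨n, hn, hεn⟩ := ((eventually_ge_atTop 1).and (hε.eventually_lt_const hpos)).exists
  exact (hA.one_div_le_rate hK hsepR a b hab hbad hn).not_gt hεn

/-- Theorem 8 / `T12_auc` of the paper: impossibility for the separate
space under AUC.  Let `R` be a separate ranking function space.  If the binary class
`φ∘R = {(x,x') ↦ 1_{r(x) > r(x')} : r ∈ R}` has finite VC dimension `dvc` and
`|X| ≥ (28·dvc + 14)·log(14·dvc + 7)`, then OOD detection is not learnable under AUC in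
the separate space `𝒟^s` for `R`. -/
theorem stmt10 {d K : ℕ} (hK : 1 ≤ K) (X : Set (EuclideanSpace ℝ (Fin d)))
    (R : Set (↥X → ℝ)) (hR : ∀ r ∈ R, Measurable r)
    (hsepR : ∀ x : ↥X, ∃ r ∈ R, ∀ x' : ↥X, x' ≠ x → r x < r x')
    (dvc : ℕ)
    (hVC : VCdim {g : ↥X × ↥X → Prop | ∃ r ∈ R, g = fun p => r p.2 < r p.1} = (dvc : ℕ∞))
    (hcard : ((⌈(28 * (dvc : ℝ) + 14) * Real.log (14 * (dvc : ℝ) + 7)⌉₊ : ℕ∞))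
        ≤ (Set.univ : Set ↥X).encard) :
    ¬ LearnableAUC (separateSpace ↥X K) R :=
  stmt10_general hK X R hsepR dvc hVC hcard

end OODF

end
end

section
/- Suppose the hypothesis space H satisfies: for every x ∈ X there exists h_x ∈ H with h_x(x) = K+1. If there exists a domain D_XY in the separate space 𝒟^s whose support is finite (a finite discrete domain) such that inf_{h∈H} R_D^out(h) > 0, then OOD detection is not learnable under risk in 𝒟^s for H. -/
/-!
Suppose `A` learns `𝒟^s` with rate `ε`, and let `x` be an OOD atom of the finite domain `D`.
Replacing the OOD part of `D` by the point mass at `(x, K+1)`, with any prior `α < 1`, gives a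
domain that is still separate (its OOD support is `{x}`, which lies in the OOD support of `D`
and hence outside the ID support) and has the same ID sample distribution. Some hypothesis
labels `x` as OOD, so the optimal risk there is at most `(1-α)B`, and consistency gives
`α · E[ℓ(A(S)(x), K+1)] ≤ ε(n) + (1-α)B`; letting `α → 1`, `E[ℓ(A(S)(x), K+1)] ≤ ε(n)`.
Averaging over the atoms of `D_O`, `inf_h R^out_D(h) ≤ E[R^out_D(A(S))] ≤ ε(n) → 0`.
-/

open MeasureTheory Filter Set
open scoped ENNReal NNReal

noncomputable section

namespace OODF

variable {𝒳 : Type*} [MeasurableSpace 𝒳] {K : ℕ}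

def IsClassifier (K : ℕ) (h : 𝒳 → ℕ) : Prop :=
  Measurable h ∧ ∀ x, h x ∈ Icc 1 (K + 1)

lemma ae_label_mem_DI (D : Domain 𝒳 K) : ∀ᵐ p ∂D.DI, p.2 ∈ Icc 1 K :=
  ae_iff.2 D.suppI

lemma ae_label_eq_DO (D : Domain 𝒳 K) : ∀ᵐ p ∂D.DO, p.2 = K + 1 :=
  ae_iff.2 D.suppO

section Loss

variable {ℓ : ℕ → ℕ → ℝ} {B : ℝ} {h : 𝒳 → ℕ}

lemma measurable_loss (hh : Measurable h) : Measurable fun p : 𝒳 × ℕ => ℓ (h p.1) p.2 :=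
  (measurable_of_countable (Function.uncurry ℓ)).comp
    ((hh.comp measurable_fst).prodMk measurable_snd)

lemma norm_loss_le (hnn : ∀ y₁ y₂, 0 ≤ ℓ y₁ y₂)
    (hB : ∀ y₁ ∈ Icc 1 (K + 1), ∀ y₂ ∈ Icc 1 (K + 1), ℓ y₁ y₂ ≤ B) {y₁ y₂ : ℕ}
    (hy₁ : y₁ ∈ Icc 1 (K + 1)) (hy₂ : y₂ ∈ Icc 1 (K + 1)) : ‖ℓ y₁ y₂‖ ≤ B := by
  rw [Real.norm_of_nonneg (hnn _ _)]
  exact hB _ hy₁ _ hy₂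

lemma integrable_loss {μ : Measure (𝒳 × ℕ)} [IsFiniteMeasure μ] (hh : IsClassifier K h)
    (hnn : ∀ y₁ y₂, 0 ≤ ℓ y₁ y₂)
    (hB : ∀ y₁ ∈ Icc 1 (K + 1), ∀ y₂ ∈ Icc 1 (K + 1), ℓ y₁ y₂ ≤ B)
    (hμ : ∀ᵐ p ∂μ, p.2 ∈ Icc 1 (K + 1)) :
    Integrable (fun p : 𝒳 × ℕ => ℓ (h p.1) p.2) μ :=
  .of_bound (measurable_loss hh.1).aestronglyMeasurable B
    (hμ.mono fun p hp => norm_loss_le hnn hB (hh.2 p.1) hp)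

lemma integral_loss_le {μ : Measure (𝒳 × ℕ)} [IsProbabilityMeasure μ] (hh : IsClassifier K h)
    (hnn : ∀ y₁ y₂, 0 ≤ ℓ y₁ y₂)
    (hB : ∀ y₁ ∈ Icc 1 (K + 1), ∀ y₂ ∈ Icc 1 (K + 1), ℓ y₁ y₂ ≤ B)
    (hμ : ∀ᵐ p ∂μ, p.2 ∈ Icc 1 (K + 1)) :
    ∫ p, ℓ (h p.1) p.2 ∂μ ≤ B := by
  simpa using integral_mono_ae (integrable_loss hh hnn hB hμ) (integrable_const B)
    (hμ.mono fun p hp => hB _ (hh.2 _) _ hp)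

lemma ae_label_mem_Icc_DI (D : Domain 𝒳 K) : ∀ᵐ p ∂D.DI, p.2 ∈ Icc 1 (K + 1) :=
  (ae_label_mem_DI D).mono fun _ hp => ⟨hp.1, hp.2.trans K.le_succ⟩

lemma ae_label_mem_Icc_DO (D : Domain 𝒳 K) : ∀ᵐ p ∂D.DO, p.2 ∈ Icc 1 (K + 1) :=
  (ae_label_eq_DO D).mono fun _ hp => by rw [hp]; exact ⟨K.succ_pos, le_rfl⟩

lemma loss_ae_eq_DO (D : Domain 𝒳 K) :
    (fun p : 𝒳 × ℕ => ℓ (h p.1) p.2) =ᵐ[D.DO] fun p => ℓ (h p.1) (K + 1) :=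
  (ae_label_eq_DO D).mono fun p hp => congrArg (ℓ (h p.1)) hp

lemma riskOut_eq_integral_loss (D : Domain 𝒳 K) :
    riskOut ℓ D h = ∫ p, ℓ (h p.1) p.2 ∂D.DO :=
  (integral_congr_ae (loss_ae_eq_DO D)).symm

lemma riskIn_nonneg (hnn : ∀ y₁ y₂, 0 ≤ ℓ y₁ y₂) (D : Domain 𝒳 K) : 0 ≤ riskIn ℓ D h :=
  integral_nonneg fun _ => hnn _ _

lemma risk_nonneg (hnn : ∀ y₁ y₂, 0 ≤ ℓ y₁ y₂) (D : Domain 𝒳 K) : 0 ≤ risk ℓ D h :=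
  integral_nonneg fun _ => hnn _ _

lemma riskOut_nonneg (hnn : ∀ y₁ y₂, 0 ≤ ℓ y₁ y₂) (D : Domain 𝒳 K) : 0 ≤ riskOut ℓ D h :=
  integral_nonneg fun _ => hnn _ _

lemma riskIn_le (hh : IsClassifier K h)
    (hnn : ∀ y₁ y₂, 0 ≤ ℓ y₁ y₂) (hB : ∀ y₁ ∈ Icc 1 (K + 1), ∀ y₂ ∈ Icc 1 (K + 1), ℓ y₁ y₂ ≤ B)
    (D : Domain 𝒳 K) : riskIn ℓ D h ≤ B :=
  have := D.probI
  integral_loss_le hh hnn hB (ae_label_mem_Icc_DI D)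

lemma riskOut_le (hh : IsClassifier K h)
    (hnn : ∀ y₁ y₂, 0 ≤ ℓ y₁ y₂) (hB : ∀ y₁ ∈ Icc 1 (K + 1), ∀ y₂ ∈ Icc 1 (K + 1), ℓ y₁ y₂ ≤ B)
    (D : Domain 𝒳 K) : riskOut ℓ D h ≤ B := by
  have := D.probO
  rw [riskOut_eq_integral_loss]
  exact integral_loss_le hh hnn hB (ae_label_mem_Icc_DO D)

lemma risk_eq_riskA (hh : IsClassifier K h)
    (hnn : ∀ y₁ y₂, 0 ≤ ℓ y₁ y₂) (hB : ∀ y₁ ∈ Icc 1 (K + 1), ∀ y₂ ∈ Icc 1 (K + 1), ℓ y₁ y₂ ≤ B)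
    (D : Domain 𝒳 K) : risk ℓ D h = riskA ℓ D h D.prior := by
  have := D.probI
  have := D.probO
  have hI := integrable_loss hh hnn hB (ae_label_mem_Icc_DI D)
  have hO := integrable_loss hh hnn hB (ae_label_mem_Icc_DO D)
  rw [risk, Domain.joint, integral_add_measure (hI.smul_measure ENNReal.ofReal_ne_top)
    (hO.smul_measure ENNReal.ofReal_ne_top), integral_smul_measure, integral_smul_measure,
    ENNReal.toReal_ofReal (sub_nonneg.2 D.prior_mem.2.le), ENNReal.toReal_ofReal D.prior_mem.1,
    riskA, riskIn, riskOut_eq_integral_loss, smul_eq_mul, smul_eq_mul]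

lemma risk_le (hh : IsClassifier K h)
    (hnn : ∀ y₁ y₂, 0 ≤ ℓ y₁ y₂) (hB : ∀ y₁ ∈ Icc 1 (K + 1), ∀ y₂ ∈ Icc 1 (K + 1), ℓ y₁ y₂ ≤ B)
    (D : Domain 𝒳 K) : risk ℓ D h ≤ B := by
  obtain ⟨hπ₀, hπ₁⟩ := D.prior_mem
  rw [risk_eq_riskA hh hnn hB, riskA]
  linarith [mul_le_mul_of_nonneg_left (riskIn_le hh hnn hB D) (sub_nonneg.2 hπ₁.le),
    mul_le_mul_of_nonneg_left (riskOut_le hh hnn hB D) hπ₀]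

end Loss

instance (D : Domain 𝒳 K) (n : ℕ) : IsProbabilityMeasure (sampleMeasure D n) :=
  have := D.probI
  inferInstanceAs (IsProbabilityMeasure (Measure.pi fun _ => D.DI))

def Domain.withOODAtom (D : Domain 𝒳 K) (x : 𝒳) (α : Ico (0 : ℝ) 1) : Domain 𝒳 K where
  DI := D.DI
  DO := Measure.dirac (x, K + 1)
  prior := α.1
  probI := D.probI
  probO := inferInstance
  suppI := D.suppI
  suppO := (dirac_eq_zero_iff_not_mem
    ((measurableSet_singleton (K + 1)).compl.preimage measurable_snd)).2 (by simp)
  prior_mem := α.2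

section Topology

lemma mSupport_dirac_subset {α : Type*} [TopologicalSpace α] [MeasurableSpace α] [T1Space α]
    [OpensMeasurableSpace α] (x : α) : mSupport (Measure.dirac x) ⊆ {x} := by
  intro y hy
  by_contra hyx
  have := hy {x}ᶜ (isOpen_compl_singleton.mem_nhds hyx)
  simp [Measure.dirac_apply' _ (measurableSet_singleton x).compl] at this

lemma mem_mSupport_map_fst {α β : Type*} [TopologicalSpace α] [MeasurableSpace α]
    [MeasurableSpace β] {μ : Measure (α × β)} {p : α × β} (hp : 0 < μ {p}) :
    p.1 ∈ mSupport (μ.map Prod.fst) := fun U hU =>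
  calc 0 < μ {p} := hp
    _ ≤ μ (Prod.fst ⁻¹' U) := measure_mono (singleton_subset_iff.2 (mem_of_mem_nhds hU : p.1 ∈ U))
    _ ≤ μ.map Prod.fst U := Measure.le_map_apply measurable_fst.aemeasurable U

lemma withOODAtom_mem_separateSpace [TopologicalSpace 𝒳] [T1Space 𝒳] [OpensMeasurableSpace 𝒳]
    {D : Domain 𝒳 K} (hD : D ∈ separateSpace 𝒳 K) {p : 𝒳 × ℕ} (hp : 0 < D.DO {p})
    (α : Ico (0 : ℝ) 1) : D.withOODAtom p.1 α ∈ separateSpace 𝒳 K := by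
  have hmarg : (D.withOODAtom p.1 α).margO = Measure.dirac p.1 :=
    Measure.map_dirac' measurable_fst _
  refine eq_empty_of_forall_notMem fun y ⟨hyO, hyI⟩ => ?_
  rw [hmarg] at hyO
  obtain rfl := mSupport_dirac_subset _ hyO
  exact eq_empty_iff_forall_notMem.1 hD _ ⟨mem_mSupport_map_fst hp, hyI⟩

end Topology

section Learning

variable [MeasurableSingletonClass 𝒳] {ℓ : ℕ → ℕ → ℝ} {B : ℝ} {H : Set (𝒳 → ℕ)}
  {𝒟 : Set (Domain 𝒳 K)} {A : Algorithm 𝒳 ℕ} {ε : ℕ → ℝ} {D : Domain 𝒳 K} {x : 𝒳} {n : ℕ}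

lemma riskOut_withOODAtom (h : 𝒳 → ℕ) (α : Ico (0 : ℝ) 1) :
    riskOut ℓ (D.withOODAtom x α) h = ℓ (h x) (K + 1) :=
  integral_dirac _ _

lemma risk_withOODAtom {h : 𝒳 → ℕ} (hh : IsClassifier K h)
    (hnn : ∀ y₁ y₂, 0 ≤ ℓ y₁ y₂) (hB : ∀ y₁ ∈ Icc 1 (K + 1), ∀ y₂ ∈ Icc 1 (K + 1), ℓ y₁ y₂ ≤ B)
    (α : Ico (0 : ℝ) 1) :
    risk ℓ (D.withOODAtom x α) h = (1 - α) * riskIn ℓ D h + α * ℓ (h x) (K + 1) := by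
  rw [risk_eq_riskA hh hnn hB, riskA, riskOut_withOODAtom]
  rfl

lemma iInf_risk_withOODAtom_le (hH : ∀ h ∈ H, IsClassifier K h)
    (hnn : ∀ y₁ y₂, 0 ≤ ℓ y₁ y₂) (hB : ∀ y₁ ∈ Icc 1 (K + 1), ∀ y₂ ∈ Icc 1 (K + 1), ℓ y₁ y₂ ≤ B)
    (hself : ℓ (K + 1) (K + 1) = 0) (hx : ∃ h ∈ H, h x = K + 1) (α : Ico (0 : ℝ) 1) :
    ⨅ h : H, risk ℓ (D.withOODAtom x α) h ≤ (1 - α) * B := by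
  obtain ⟨g, hgH, hgx⟩ := hx
  have hg := hH g hgH
  calc ⨅ h : H, risk ℓ (D.withOODAtom x α) h
      ≤ risk ℓ (D.withOODAtom x α) g :=
        ciInf_le ⟨0, forall_mem_range.2 fun _ => risk_nonneg hnn _⟩ (⟨g, hgH⟩ : H)
    _ = (1 - α) * riskIn ℓ D g := by
        rw [risk_withOODAtom hg hnn hB, hgx, hself, mul_zero, add_zero]
    _ ≤ (1 - α) * B :=
        mul_le_mul_of_nonneg_left (riskIn_le hg hnn hB D) (sub_nonneg.2 α.2.2.le)

lemma measurable_loss_at_of_consistent (hA : ConsistentRisk ℓ 𝒟 H A ε)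
    (hH : ∀ h ∈ H, IsClassifier K h) (hnn : ∀ y₁ y₂, 0 ≤ ℓ y₁ y₂)
    (hB : ∀ y₁ ∈ Icc 1 (K + 1), ∀ y₂ ∈ Icc 1 (K + 1), ℓ y₁ y₂ ≤ B)
    (h𝒟 : ∀ α, D.withOODAtom x α ∈ 𝒟) (hn : 1 ≤ n) :
    Measurable fun S : Fin n → 𝒳 × ℕ => ℓ (A n S x) (K + 1) := by
  have hrisk := fun α S =>
    risk_withOODAtom (D := D) (x := x) (hH _ (hA.1 n hn S)) hnn hB α
  have hsplit : (fun S => ℓ (A n S x) (K + 1)) = fun S =>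
      2 * risk ℓ (D.withOODAtom x ⟨1 / 2, by norm_num⟩) (A n S)
        - risk ℓ (D.withOODAtom x ⟨0, by norm_num⟩) (A n S) := by
    funext S
    rw [hrisk, hrisk]
    norm_num
    ring
  rw [hsplit]
  exact ((hA.2.1 _ (h𝒟 _) n hn).const_mul 2).sub (hA.2.1 _ (h𝒟 _) n hn)

lemma integrable_loss_at_of_consistent (hA : ConsistentRisk ℓ 𝒟 H A ε)
    (hH : ∀ h ∈ H, IsClassifier K h) (hnn : ∀ y₁ y₂, 0 ≤ ℓ y₁ y₂)
    (hB : ∀ y₁ ∈ Icc 1 (K + 1), ∀ y₂ ∈ Icc 1 (K + 1), ℓ y₁ y₂ ≤ B)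
    (h𝒟 : ∀ α, D.withOODAtom x α ∈ 𝒟) (hn : 1 ≤ n) :
    Integrable (fun S => ℓ (A n S x) (K + 1)) (sampleMeasure D n) :=
  .of_bound (measurable_loss_at_of_consistent hA hH hnn hB h𝒟 hn).aestronglyMeasurable B
    (ae_of_all _ fun S => norm_loss_le hnn hB ((hH _ (hA.1 n hn S)).2 x)
      (right_mem_Icc.2 K.succ_pos))

lemma le_of_forall_lt_one_mul_sub_le {I B c : ℝ}
    (h : ∀ a ∈ Ico (0 : ℝ) 1, a * I - (1 - a) * B ≤ c) : I ≤ c := by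
  have hlim : Tendsto (fun a : ℝ => a * I - (1 - a) * B) (nhdsWithin 1 (Iio 1)) (nhds I) := by
    have hcont : Continuous fun a : ℝ => a * I - (1 - a) * B := by fun_prop
    simpa using (hcont.tendsto 1).mono_left nhdsWithin_le_nhds
  exact le_of_tendsto hlim
    (eventually_of_mem (Ioo_mem_nhdsLT one_pos) fun a ha => h a ⟨ha.1.le, ha.2⟩)

lemma integral_loss_at_le_of_consistent (hA : ConsistentRisk ℓ 𝒟 H A ε)
    (hH : ∀ h ∈ H, IsClassifier K h) (hnn : ∀ y₁ y₂, 0 ≤ ℓ y₁ y₂)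
    (hB : ∀ y₁ ∈ Icc 1 (K + 1), ∀ y₂ ∈ Icc 1 (K + 1), ℓ y₁ y₂ ≤ B)
    (hself : ℓ (K + 1) (K + 1) = 0) (hx : ∃ h ∈ H, h x = K + 1)
    (h𝒟 : ∀ α, D.withOODAtom x α ∈ 𝒟) (hn : 1 ≤ n) :
    ∫ S, ℓ (A n S x) (K + 1) ∂(sampleMeasure D n) ≤ ε n := by
  have hg := integrable_loss_at_of_consistent hA hH hnn hB h𝒟 hn
  refine le_of_forall_lt_one_mul_sub_le (B := B) fun a ha => ?_
  set α : Ico (0 : ℝ) 1 := ⟨a, ha⟩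
  have hr : Integrable (fun S => risk ℓ (D.withOODAtom x α) (A n S)) (sampleMeasure D n) :=
    .of_bound (hA.2.1 _ (h𝒟 α) n hn).aestronglyMeasurable B (ae_of_all _ fun S => by
      rw [Real.norm_of_nonneg (risk_nonneg hnn _)]
      exact risk_le (hH _ (hA.1 n hn S)) hnn hB _)
  calc a * ∫ S, ℓ (A n S x) (K + 1) ∂(sampleMeasure D n) - (1 - a) * B
      ≤ ∫ S, risk ℓ (D.withOODAtom x α) (A n S) ∂(sampleMeasure D n)
          - ⨅ h : H, risk ℓ (D.withOODAtom x α) h := by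
        refine sub_le_sub ?_ (iInf_risk_withOODAtom_le hH hnn hB hself hx α)
        rw [← integral_const_mul]
        refine integral_mono (hg.const_mul a) hr fun S => ?_
        rw [risk_withOODAtom (hH _ (hA.1 n hn S)) hnn hB]
        exact le_add_of_nonneg_left (mul_nonneg (sub_nonneg.2 ha.2.le) (riskIn_nonneg hnn D))
    _ = ∫ S, (risk ℓ (D.withOODAtom x α) (A n S) - ⨅ h : H, risk ℓ (D.withOODAtom x α) h)
          ∂(sampleMeasure D n) := by
        rw [integral_sub hr (integrable_const _), integral_const, probReal_univ, one_smul]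
    _ ≤ ε n := hA.2.2 _ (h𝒟 α) n hn

lemma riskOut_eq_sum {h : 𝒳 → ℕ} (hh : IsClassifier K h)
    (hnn : ∀ y₁ y₂, 0 ≤ ℓ y₁ y₂) (hB : ∀ y₁ ∈ Icc 1 (K + 1), ∀ y₂ ∈ Icc 1 (K + 1), ℓ y₁ y₂ ≤ B)
    {s : Finset (𝒳 × ℕ)} (hs : D.DO (↑s)ᶜ = 0) :
    riskOut ℓ D h = ∑ p ∈ s, D.DO.real {p} * ℓ (h p.1) (K + 1) := by
  have := D.probO
  have hint := (integrable_loss hh hnn hB (ae_label_mem_Icc_DO D)).congr (loss_ae_eq_DO D)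
  rw [riskOut, integral_eq_setIntegral (ae_iff.2 hs), setIntegral_finset s hint.integrableOn]
  simp only [smul_eq_mul]

lemma iInf_riskOut_le_of_consistent (hA : ConsistentRisk ℓ 𝒟 H A ε)
    (hH : ∀ h ∈ H, IsClassifier K h) (hnn : ∀ y₁ y₂, 0 ≤ ℓ y₁ y₂)
    (hB : ∀ y₁ ∈ Icc 1 (K + 1), ∀ y₂ ∈ Icc 1 (K + 1), ℓ y₁ y₂ ≤ B)
    (hself : ℓ (K + 1) (K + 1) = 0) (hsepH : ∀ x, ∃ h ∈ H, h x = K + 1)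
    (h𝒟 : ∀ p, 0 < D.DO {p} → ∀ α, D.withOODAtom p.1 α ∈ 𝒟)
    {s : Finset (𝒳 × ℕ)} (hs : D.DO (↑s)ᶜ = 0) (hn : 1 ≤ n) :
    ⨅ h : H, riskOut ℓ D h ≤ ε n := by
  have := D.probO
  have hterm : ∀ p ∈ s,
      Integrable (fun S => D.DO.real {p} * ℓ (A n S p.1) (K + 1)) (sampleMeasure D n) ∧
      ∫ S, D.DO.real {p} * ℓ (A n S p.1) (K + 1) ∂(sampleMeasure D n)
        ≤ D.DO.real {p} * ε n := by
    intro p _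
    rcases eq_zero_or_pos (D.DO {p}) with hp | hp
    · simp [measureReal_def, hp]
    · refine ⟨(integrable_loss_at_of_consistent hA hH hnn hB (h𝒟 p hp) hn).const_mul _, ?_⟩
      rw [integral_const_mul]
      exact mul_le_mul_of_nonneg_left
        (integral_loss_at_le_of_consistent hA hH hnn hB hself (hsepH _) (h𝒟 p hp) hn)
        measureReal_nonneg
  have hsum : (fun S => riskOut ℓ D (A n S)) =
      fun S => ∑ p ∈ s, D.DO.real {p} * ℓ (A n S p.1) (K + 1) :=
    funext fun S => riskOut_eq_sum (hH _ (hA.1 n hn S)) hnn hB hs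
  have hint : Integrable (fun S => riskOut ℓ D (A n S)) (sampleMeasure D n) :=
    hsum ▸ integrable_finsetSum s fun p hp => (hterm p hp).1
  calc ⨅ h : H, riskOut ℓ D h
      = ∫ _, ⨅ h : H, riskOut ℓ D h ∂(sampleMeasure D n) := by simp
    _ ≤ ∫ S, riskOut ℓ D (A n S) ∂(sampleMeasure D n) :=
        integral_mono (integrable_const _) hint fun S =>
          ciInf_le ⟨0, forall_mem_range.2 fun _ => riskOut_nonneg hnn _⟩ (⟨A n S, hA.1 n hn S⟩ : H)
    _ = ∑ p ∈ s, ∫ S, D.DO.real {p} * ℓ (A n S p.1) (K + 1) ∂(sampleMeasure D n) := by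
        rw [hsum, integral_finsetSum s fun p hp => (hterm p hp).1]
    _ ≤ ∑ p ∈ s, D.DO.real {p} * ε n := Finset.sum_le_sum fun p hp => (hterm p hp).2
    _ = ε n := by
        rw [← Finset.sum_mul, sum_measureReal_singleton, measureReal_def,
          (prob_compl_eq_zero_iff s.measurableSet).1 hs, ENNReal.toReal_one, one_mul]

end Learning

/-- Lemma `T9` of the paper.  Suppose every point of `X` can be labeled
OOD by some hypothesis in `H`.  If some finite discrete domain `D` in the separate space
`𝒟^s` satisfies `inf_{h∈H} R_D^out(h) > 0`, then OOD detection is not learnable under risk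
in `𝒟^s` for `H`. -/
theorem stmt17 {d K : ℕ} (X : Set (EuclideanSpace ℝ (Fin d)))
    (ℓ : ℕ → ℕ → ℝ)
    (hl_nonneg : ∀ y₁ y₂, 0 ≤ ℓ y₁ y₂)
    (hl_zero : ∀ y₁ ∈ Set.Icc 1 (K + 1), ∀ y₂ ∈ Set.Icc 1 (K + 1), (ℓ y₁ y₂ = 0 ↔ y₁ = y₂))
    (hl_bdd : ∃ B, ∀ y₁ ∈ Set.Icc 1 (K + 1), ∀ y₂ ∈ Set.Icc 1 (K + 1), ℓ y₁ y₂ ≤ B)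
    (H : Set (↥X → ℕ)) (hH : ∀ h ∈ H, Measurable h ∧ ∀ x, h x ∈ Set.Icc 1 (K + 1))
    (hsepH : ∀ x : ↥X, ∃ h ∈ H, h x = K + 1)
    (hexist : ∃ D ∈ separateSpace ↥X K,
      (∃ s : Finset (↥X × ℕ), D.DI ((↑s : Set (↥X × ℕ))ᶜ) = 0 ∧
        D.DO ((↑s : Set (↥X × ℕ))ᶜ) = 0) ∧
      0 < ⨅ h : H, riskOut ℓ D h.1) :
    ¬ LearnableRisk ℓ (separateSpace ↥X K) H := by
  rintro ⟨ε, -, hε, A, hA⟩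
  obtain ⟨D, hD, ⟨s, -, hs⟩, hpos⟩ := hexist
  obtain ⟨B, hB⟩ := hl_bdd
  have hK : K + 1 ∈ Icc 1 (K + 1) := right_mem_Icc.2 K.succ_pos
  have hle : ∀ n ≥ 1, ⨅ h : H, riskOut ℓ D h.1 ≤ ε n := fun n hn =>
    iInf_riskOut_le_of_consistent hA hH hl_nonneg hB ((hl_zero _ hK _ hK).2 rfl) hsepH
      (fun _ hp α => withOODAtom_mem_separateSpace hD hp α) hs hn
  exact hpos.not_ge (ge_of_tendsto hε (eventually_atTop.2 ⟨1, hle⟩))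

end OODF

end
end
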